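/- If G is a connected graph with exactly one positive anti-adjacency eigenvalue, then G contains no induced subgraph isomorphic to the 4-cycle C_4. -/
import Mathlib


/-- The eccentricity of a vertex `u` in a graph `G`: the maximum distance from `u`. -/
noncomputable def ecc {V : Type*} [Fintype V] (G : SimpleGraph V) (u : V) : ℕ :=
  Finset.univ.sup (G.dist u)

/-- The anti-adjacency (eccentricity) matrix of a graph: the `(u,v)` entry is `d_G(u,v)`
if `d_G(u,v) = min (ε_G(u)) (ε_G(v))`, and `0` otherwise. -/
noncomputable def antiAdj {V : Type*} [Fintype V] (G : SimpleGraph V) : Matrix V V ℝ :=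
  Matrix.of fun u v =>
    if G.dist u v = min (ecc G u) (ecc G v) then (G.dist u v : ℝ) else 0

open Matrix Finset

set_option linter.unusedSectionVars false

section Aux

variable {V : Type*} [Fintype V] [DecidableEq V]

private lemma quadform_eq (A : Matrix V V ℝ) (hA : A.IsHermitian) (v : V → ℝ) :
    v ⬝ᵥ A *ᵥ v = ∑ i, hA.eigenvalues i * (((hA.eigenvectorUnitary : Matrix V V ℝ)ᵀ *ᵥ v) i)^2 := by
  set U : Matrix V V ℝ := (hA.eigenvectorUnitary : Matrix V V ℝ) with hU
  set μ : V → ℝ := hA.eigenvalues with hμ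
  have hspec : A = U * Matrix.diagonal (RCLike.ofReal ∘ μ) * star U :=
    hA.spectral_theorem
  have hstar : star U = Uᵀ := by
    ext i j; simp [Matrix.star_eq_conjTranspose, Matrix.conjTranspose_apply]
  clear_value U μ
  rw [hstar] at hspec
  rw [hspec, ← Matrix.mulVec_mulVec, ← Matrix.mulVec_mulVec,
    Matrix.dotProduct_mulVec, ← Matrix.mulVec_transpose]
  have : Matrix.diagonal (RCLike.ofReal ∘ μ) *ᵥ (Uᵀ *ᵥ v) =
      fun i => μ i * (Uᵀ *ᵥ v) i := by
    ext i; simp [Matrix.mulVec_diagonal]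
  rw [this, dotProduct]
  exact Finset.sum_congr rfl fun i _ => by ring

private lemma core' (A : Matrix V V ℝ) (hA : A.IsHermitian)
    (hone : (Finset.univ.filter (fun i => 0 < hA.eigenvalues i)).card = 1)
    (x y : V → ℝ)
    (hpos : ∀ s t : ℝ, ¬(s = 0 ∧ t = 0) →
      0 < (s • x + t • y) ⬝ᵥ A *ᵥ (s • x + t • y)) : False := by
  obtain ⟨i₀, hi₀⟩ := Finset.card_eq_one.mp hone
  have hle : ∀ j, j ≠ i₀ → hA.eigenvalues j ≤ 0 := by
    intro j hj
    by_contra h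
    push_neg at h
    have : j ∈ Finset.univ.filter (fun i => 0 < hA.eigenvalues i) :=
      Finset.mem_filter.mpr ⟨Finset.mem_univ _, h⟩
    rw [hi₀, Finset.mem_singleton] at this
    exact hj this
  set U : Matrix V V ℝ := (hA.eigenvectorUnitary : Matrix V V ℝ) with hU
  set cx := (Uᵀ *ᵥ x) i₀ with hcx
  set cy := (Uᵀ *ᵥ y) i₀ with hcy
  obtain ⟨s, t, hst, hker⟩ : ∃ s t : ℝ, ¬(s = 0 ∧ t = 0) ∧ s * cx + t * cy = 0 := by
    by_cases h : cx = 0 ∧ cy = 0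
    · exact ⟨1, 0, by simp, by simp [h.1, h.2]⟩
    · refine ⟨cy, -cx, ?_, by ring⟩
      rintro ⟨h1, h2⟩
      exact h ⟨by linarith [neg_eq_zero.mp h2], h1⟩
  have hform := quadform_eq A hA (s • x + t • y)
  have hlin : Uᵀ *ᵥ (s • x + t • y) = s • (Uᵀ *ᵥ x) + t • (Uᵀ *ᵥ y) := by
    rw [Matrix.mulVec_add, Matrix.mulVec_smul, Matrix.mulVec_smul]
  have hnonpos : (s • x + t • y) ⬝ᵥ A *ᵥ (s • x + t • y) ≤ 0 := by
    rw [hform]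
    apply Finset.sum_nonpos
    intro i _
    by_cases hi : i = i₀
    · subst hi
      have h0 : (Uᵀ *ᵥ (s • x + t • y)) i = 0 := by
        rw [hlin]; simpa using hker
      rw [h0]; simp
    · exact mul_nonpos_iff.mpr (Or.inr ⟨hle i hi, sq_nonneg _⟩)
  exact absurd (hpos s t hst) (not_lt.mpr hnonpos)

private lemma expand4' (A : Matrix V V ℝ) (u v p q : V) (a b c d : ℝ) :
    ((Pi.single u a : V → ℝ) + Pi.single v b + Pi.single p c + Pi.single q d) ⬝ᵥ
      A *ᵥ ((Pi.single u a : V → ℝ) + Pi.single v b + Pi.single p c + Pi.single q d) =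
    a*a*A u u + a*b*A u v + a*c*A u p + a*d*A u q
    + b*a*A v u + b*b*A v v + b*c*A v p + b*d*A v q
    + c*a*A p u + c*b*A p v + c*c*A p p + c*d*A p q
    + d*a*A q u + d*b*A q v + d*c*A q p + d*d*A q q := by
  simp [Matrix.mulVec_add, Matrix.mulVec_single, dotProduct_add,
    add_dotProduct, single_dotProduct, Pi.add_apply]
  ring

private lemma gadget (A : Matrix V V ℝ) (hA : A.IsHermitian)
    (hone : (Finset.univ.filter (fun i => 0 < hA.eigenvalues i)).card = 1)
    (u v p q : V)
    (huv : 0 < A u v) (hpq : 0 < A p q) (hpu : A p u = 0) (hpv : A p v = 0)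
    (huu : A u u = 0) (hvv : A v v = 0) (hpp : A p p = 0) (hqq : A q q = 0) : False := by
  have hsymm : ∀ i j, A j i = A i j := by
    intro i j
    have := congrFun (congrFun hA j) i
    simpa [Matrix.conjTranspose_apply] using this.symm
  have hup : A u p = 0 := (hsymm p u).trans hpu
  have hvp : A v p = 0 := (hsymm p v).trans hpv
  have hvu : A v u = A u v := hsymm u v
  have hqu : A q u = A u q := hsymm u q
  have hqv : A q v = A v q := hsymm v q
  have hqp : A q p = A p q := hsymm p q
  have hδ0 : A p q ≠ 0 := ne_of_gt hpq
  set l : ℝ := -(A u q + A v q)/(A p q) with hl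
  apply core' A hA hone
    ((Pi.single u 1 : V → ℝ) + Pi.single v 1 + Pi.single p l)
    ((Pi.single p (A p q) : V → ℝ) + Pi.single q 1)
  intro s t hst
  have hcomb : s • ((Pi.single u 1 : V → ℝ) + Pi.single v 1 + Pi.single p l)
      + t • ((Pi.single p (A p q) : V → ℝ) + Pi.single q 1)
    = (Pi.single u s : V → ℝ) + Pi.single v s + Pi.single p (s*l + t*(A p q))
        + Pi.single q t := by
    ext w
    simp [Pi.single_apply]
    split_ifs <;> ring
  rw [hcomb, expand4' A u v p q s s (s*l + t*(A p q)) t,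
    hup, hvp, hvu, hqu, hqv, hqp, hpu, hpv, huu, hvv, hpp, hqq]
  have keyeq : s * s * A u v + s * (s * l + t * (A p q)) * 0 + s * t * A u q
      + s * s * A u v + s * (s * l + t * (A p q)) * 0 + s * t * A v q
      + (s * l + t * (A p q)) * s * 0 + (s * l + t * (A p q)) * s * 0
      + (s * l + t * (A p q)) * (s * l + t * (A p q)) * 0
      + (s * l + t * (A p q)) * t * A p q
      + t * s * A u q + t * s * A v q + t * (s * l + t * (A p q)) * A p q
      + t * t * 0
      = 2*s^2*(A u v) + 2*t^2*(A p q)^2 := by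
    rw [hl]; field_simp; ring
  have h2 : (0:ℝ) < 2*s^2*(A u v) + 2*t^2*(A p q)^2 := by
    rcases not_and_or.mp hst with hs | ht
    · have hs2 : 0 < s^2 := by positivity
      nlinarith [sq_nonneg t, sq_nonneg (A p q), mul_pos huv hs2]
    · have ht2 : 0 < t^2 := by positivity
      nlinarith [sq_nonneg s, mul_pos (mul_pos hpq hpq) ht2]
  calc (0:ℝ) < 2*s^2*(A u v) + 2*t^2*(A p q)^2 := h2
    _ = _ := by rw [← keyeq]; ring

variable (G : SimpleGraph V)

private lemma dist_le_ecc (u y : V) : G.dist u y ≤ ecc G u :=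
  Finset.le_sup (Finset.mem_univ y)

private lemma exists_ecc [Nonempty V] (u : V) : ∃ w, G.dist u w = ecc G u := by
  obtain ⟨w, -, hw⟩ := Finset.exists_mem_eq_sup Finset.univ Finset.univ_nonempty (G.dist u)
  exact ⟨w, hw.symm⟩

private lemma antiAdj_apply (u v : V) :
    antiAdj G u v = if G.dist u v = min (ecc G u) (ecc G v) then (G.dist u v : ℝ) else 0 := rfl

private lemma antiAdj_nonneg (u v : V) : 0 ≤ antiAdj G u v := by
  rw [antiAdj_apply]
  split_ifs <;> positivity

private lemma antiAdj_diag (u : V) : antiAdj G u u = 0 := by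
  rw [antiAdj_apply]
  split_ifs with h
  · simp
  · rfl

private lemma antiAdj_comm (u v : V) : antiAdj G u v = antiAdj G v u := by
  rw [antiAdj_apply, antiAdj_apply, SimpleGraph.dist_comm, min_comm]

private lemma antiAdj_adj (u v : V) (h : G.Adj u v) (hu : 2 ≤ ecc G u) (hv : 2 ≤ ecc G v) :
    antiAdj G u v = 0 := by
  rw [antiAdj_apply, if_neg]
  rw [SimpleGraph.dist_eq_one_iff_adj.mpr h]
  omega

private lemma antiAdj_eccVertex (u w : V) (hw : G.dist u w = ecc G u) :
    antiAdj G u w = (ecc G u : ℝ) := by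
  have hle : ecc G u ≤ ecc G w := by
    calc ecc G u = G.dist w u := by rw [SimpleGraph.dist_comm]; exact hw.symm
    _ ≤ ecc G w := dist_le_ecc G w u
  rw [antiAdj_apply, if_pos, hw]
  rw [hw]
  omega

end Aux

/-- A connected graph with exactly one positive anti-adjacency eigenvalue contains no induced
4-cycle `C₄`. -/
theorem no_induced_C4_of_one_positive_antiadjacency_eigenvalue
    {V : Type*} [Fintype V] [DecidableEq V] (G : SimpleGraph V) (hG : G.Connected)
    (hH : (antiAdj G).IsHermitian)
    (hone : (Finset.univ.filter (fun i => 0 < hH.eigenvalues i)).card = 1) :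
    ¬ ∃ a b c d : V, a ≠ b ∧ a ≠ c ∧ a ≠ d ∧ b ≠ c ∧ b ≠ d ∧ c ≠ d ∧
      G.Adj a b ∧ G.Adj b c ∧ G.Adj c d ∧ G.Adj d a ∧ ¬ G.Adj a c ∧ ¬ G.Adj b d := by
  rintro ⟨a, b, c, d, hab', hac', had', hbc', hbd', hcd', hab, hbc, hcd, hda, hnac, hnbd⟩
  have : Nonempty V := ⟨a⟩
  -- distance between opposite vertices is 2
  have hdist2 : ∀ x y z : V, x ≠ z → G.Adj x y → G.Adj y z → ¬ G.Adj x z →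
      G.dist x z = 2 := by
    intro x y z hxz hxy hyz hnxz
    have hle : G.dist x z ≤ 2 := by
      have := SimpleGraph.dist_le (SimpleGraph.Walk.cons hxy (SimpleGraph.Walk.cons hyz
        SimpleGraph.Walk.nil))
      simpa using this
    have h0 : G.dist x z ≠ 0 := by
      intro h
      exact hxz (hG.dist_eq_zero_iff.mp h)
    have h1 : G.dist x z ≠ 1 := by
      intro h
      exact hnxz (SimpleGraph.dist_eq_one_iff_adj.mp h)
    omega
  have hdac : G.dist a c = 2 := hdist2 a b c hac' hab hbc hnac
  have hdbd : G.dist b d = 2 := hdist2 b c d hbd' hbc hcd hnbd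
  have hea : 2 ≤ ecc G a := hdac ▸ dist_le_ecc G a c
  have heb : 2 ≤ ecc G b := hdbd ▸ dist_le_ecc G b d
  have hec : 2 ≤ ecc G c := by
    have := dist_le_ecc G c a
    rw [SimpleGraph.dist_comm, hdac] at this
    exact this
  have hed : 2 ≤ ecc G d := by
    have := dist_le_ecc G d b
    rw [SimpleGraph.dist_comm, hdbd] at this
    exact this
  -- eccentric vertices
  obtain ⟨wa, hwa⟩ := exists_ecc G a
  obtain ⟨wb, hwb⟩ := exists_ecc G b
  have hEawa : antiAdj G a wa = (ecc G a : ℝ) := antiAdj_eccVertex G a wa hwa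
  have hEbwb : antiAdj G b wb = (ecc G b : ℝ) := antiAdj_eccVertex G b wb hwb
  have hEawa_pos : 0 < antiAdj G a wa := by
    rw [hEawa]; exact_mod_cast lt_of_lt_of_le (by norm_num) hea
  have hEbwb_pos : 0 < antiAdj G b wb := by
    rw [hEbwb]; exact_mod_cast lt_of_lt_of_le (by norm_num) heb
  by_cases hbd : 0 < antiAdj G b d
  · -- gadget (b, d, a, wa)
    exact gadget (antiAdj G) hH hone b d a wa hbd hEawa_pos
      (antiAdj_adj G a b hab hea heb) (antiAdj_adj G a d hda.symm hea hed)
      (antiAdj_diag G b) (antiAdj_diag G d) (antiAdj_diag G a) (antiAdj_diag G wa)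
  by_cases hac : 0 < antiAdj G a c
  · -- gadget (a, c, b, wb)
    exact gadget (antiAdj G) hH hone a c b wb hac hEbwb_pos
      (antiAdj_adj G b a hab.symm heb hea) (antiAdj_adj G b c hbc heb hec)
      (antiAdj_diag G a) (antiAdj_diag G c) (antiAdj_diag G b) (antiAdj_diag G wb)
  -- now both are zero, so all four eccentricities are ≥ 3
  have hac0 : antiAdj G a c = 0 := le_antisymm (not_lt.mp hac) (antiAdj_nonneg G a c)
  have hbd0 : antiAdj G b d = 0 := le_antisymm (not_lt.mp hbd) (antiAdj_nonneg G b d)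
  have hmin3 : ∀ x z : V, G.dist x z = 2 → antiAdj G x z = 0 →
      3 ≤ ecc G x ∧ 3 ≤ ecc G z := by
    intro x z hd h0
    have hx : 2 ≤ ecc G x := hd ▸ dist_le_ecc G x z
    have hz : 2 ≤ ecc G z := by
      have := dist_le_ecc G z x
      rw [SimpleGraph.dist_comm, hd] at this
      exact this
    rw [antiAdj_apply, hd] at h0
    by_cases hcond : 2 = min (ecc G x) (ecc G z)
    · rw [if_pos hcond] at h0
      norm_num at h0
    · constructor <;> omega
  obtain ⟨hea3, hec3⟩ := hmin3 a c hdac hac0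
  -- every vertex has eccentricity ≥ 2
  have hecc2 : ∀ x : V, 2 ≤ ecc G x := by
    intro x
    have hsum : ecc G a ≤ ecc G x + ecc G x := by
      apply Finset.sup_le
      intro y _
      calc G.dist a y ≤ G.dist a x + G.dist x y := hG.dist_triangle
        _ ≤ ecc G x + ecc G x := by
            have h1 : G.dist a x ≤ ecc G x := by
              have := dist_le_ecc G x a
              rw [SimpleGraph.dist_comm] at this
              exact this
            exact Nat.add_le_add h1 (dist_le_ecc G x y)
    omega
  have hadj0 : ∀ x y : V, G.Adj x y → antiAdj G x y = 0 := fun x y h =>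
    antiAdj_adj G x y h (hecc2 x) (hecc2 y)
  -- no gadget configuration exists, thus the zero-relation is transitive
  by_cases hgad : ∃ u v p : V, 0 < antiAdj G u v ∧ antiAdj G p u = 0 ∧ antiAdj G p v = 0
  · obtain ⟨u, v, p, h1, h2, h3⟩ := hgad
    obtain ⟨wp, hwp⟩ := exists_ecc G p
    have hEpwp : 0 < antiAdj G p wp := by
      rw [antiAdj_eccVertex G p wp hwp]
      exact_mod_cast lt_of_lt_of_le (by norm_num) (hecc2 p)
    exact gadget (antiAdj G) hH hone u v p wp h1 hEpwp h2 h3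
      (antiAdj_diag G u) (antiAdj_diag G v) (antiAdj_diag G p) (antiAdj_diag G wp)
  · push_neg at hgad
    have htrans : ∀ x y z : V, antiAdj G x y = 0 → antiAdj G y z = 0 →
        antiAdj G x z = 0 := by
      intro x y z hxy hyz
      by_contra h
      have hpos : 0 < antiAdj G x z :=
        lt_of_le_of_ne (antiAdj_nonneg G x z) (Ne.symm h)
      have hyx : antiAdj G y x = 0 := by rw [antiAdj_comm]; exact hxy
      exact hgad x z y hpos hyx hyz
    have hwalk : ∀ (x z : V), G.Walk x z → antiAdj G x z = 0 := by
      intro x z w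
      induction w with
      | nil => exact antiAdj_diag G _
      | cons h p ih => exact htrans _ _ _ (hadj0 _ _ h) ih
    have h0 : antiAdj G a wa = 0 := hwalk a wa (hG.preconnected a wa).some
    rw [hEawa] at h0
    have : (0:ℝ) < (ecc G a : ℝ) := by exact_mod_cast lt_of_lt_of_le (by norm_num) hea
    linarith
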